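/- arXiv:1911.07971 — 3 statements merged into one kernel-verified Lean document; each statement's English description precedes it below -/
import Mathlib

section
/- Let H be a d×d Hadamard matrix with rows h_1,...,h_d, and let C_RM = {h_i : i ∈ [d]} ∪ {−h_i : i ∈ [d]}. Then for every x ∈ S^{d-1} there exists c ∈ C_RM with ⟨x, c⟩ ≥ 1; hence B(0,1) ⊆ conv(C_RM) ⊆ B(0, √d). -/
/-!
Since `HᵀH = d • 1`, the squares of the inner products `⟪x, h_i⟫` sum to `d‖x‖²`, so one of them
has absolute value at least `‖x‖`, and the right sign `±h_i` gives `‖x‖ ≤ ⟪x, ±h_i⟫`. A point `z`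
of the unit ball outside the (closed) convex hull would be strictly separated from it by some
`⟪v, ·⟫`; but then `‖v‖ ≤ ⟪v, c⟫ < ⟪v, z⟫ ≤ ‖v‖` for the `c` chosen for `v`. The outer inclusion
holds because every `±h_i` has norm `√d`.
-/

open scoped RealInnerProductSpace Matrix

theorem Matrix.dotProduct_mulVec_self_of_transpose_mul_eq_smul {m n R : Type*} [Fintype m]
    [Fintype n] [DecidableEq n] [CommRing R] {A : Matrix m n R} {c : R}
    (hA : Aᵀ * A = c • 1) (x : n → R) :
    (A *ᵥ x) ⬝ᵥ (A *ᵥ x) = c * (x ⬝ᵥ x) := by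
  rw [dotProduct_comm, dotProduct_mulVec, ← mulVec_transpose, mulVec_mulVec, hA,
    smul_mulVec, one_mulVec, smul_dotProduct, smul_eq_mul, dotProduct_comm]

theorem EuclideanSpace.norm_eq_sqrt_card_of_forall_abs_eq_one {ι : Type*} [Fintype ι]
    {v : EuclideanSpace ℝ ι} (hv : ∀ i, |v i| = 1) : ‖v‖ = √(Fintype.card ι) := by
  simp [EuclideanSpace.norm_eq, hv]

theorem exists_le_abs_of_card_mul_sq_le_sum_sq {ι : Type*} [Fintype ι] [Nonempty ι] {a : ι → ℝ}
    {r : ℝ} (hr : 0 ≤ r) (ha : Fintype.card ι * r ^ 2 ≤ ∑ i, a i ^ 2) :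
    ∃ i, r ≤ |a i| := by
  obtain ⟨i, -, hi⟩ := Finset.exists_le_of_sum_le Finset.univ_nonempty
    (f := fun _ => r ^ 2) (g := fun i => a i ^ 2) (by simp [ha])
  exact ⟨i, abs_of_nonneg hr ▸ sq_le_sq.mp hi⟩

theorem closedBall_subset_convexHull_of_norm_le_inner {E : Type*} [NormedAddCommGroup E]
    [InnerProductSpace ℝ E] [CompleteSpace E] {S : Set E} (hS : S.Finite)
    (h : ∀ x, ∃ c ∈ S, ‖x‖ ≤ ⟪x, c⟫) : Metric.closedBall 0 1 ⊆ convexHull ℝ S := by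
  intro z hz
  by_contra hz'
  obtain ⟨f, u, hfS, hfz⟩ := geometric_hahn_banach_closed_point (convex_convexHull ℝ S)
    (hS.isCompact_convexHull (𝕜 := ℝ)).isClosed hz'
  set v := (InnerProductSpace.toDual ℝ E).symm f
  have hv (w : E) : ⟪v, w⟫ = f w := InnerProductSpace.toDual_symm_apply
  obtain ⟨c, hcS, hc⟩ := h v
  have : ‖v‖ < ‖v‖ := calc
    ‖v‖ ≤ ⟪v, c⟫ := hc
    _ = f c := hv c
    _ < f z := (hfS c (subset_convexHull ℝ S hcS)).trans hfz
    _ = ⟪v, z⟫ := (hv z).symm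
    _ ≤ ‖v‖ * ‖z‖ := real_inner_le_norm v z
    _ ≤ ‖v‖ := mul_le_of_le_one_right (norm_nonneg v) (mem_closedBall_zero_iff.mp hz)
  exact lt_irrefl _ this

theorem stmt_9 (d : ℕ) (hd : 0 < d) (H : Matrix (Fin d) (Fin d) ℝ)
    (hent : ∀ i j, H i j = 1 ∨ H i j = -1)
    (horth : H.transpose * H = (d : ℝ) • 1) :
    let row : Fin d → EuclideanSpace ℝ (Fin d) := fun i => WithLp.toLp 2 (fun j => H i j)
    let CRM : Set (EuclideanSpace ℝ (Fin d)) := {c | ∃ i, c = row i ∨ c = -row i}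
    (∀ x : EuclideanSpace ℝ (Fin d), ‖x‖ = 1 → ∃ c ∈ CRM, 1 ≤ ⟪x, c⟫) ∧
      Metric.closedBall (0 : EuclideanSpace ℝ (Fin d)) 1 ⊆ convexHull ℝ CRM ∧
      convexHull ℝ CRM ⊆ Metric.closedBall (0 : EuclideanSpace ℝ (Fin d)) (Real.sqrt d) := by
  intro row CRM
  have hsum (x : EuclideanSpace ℝ (Fin d)) : ∑ i, ⟪x, row i⟫ ^ 2 = d * ‖x‖ ^ 2 := by
    have hrow (i : Fin d) : ⟪x, row i⟫ = (H *ᵥ x.ofLp) i := by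
      simp [row, EuclideanSpace.inner_eq_star_dotProduct, Matrix.mulVec, dotProduct_comm]
    rw [← real_inner_self_eq_norm_sq, EuclideanSpace.inner_eq_star_dotProduct]
    simp only [hrow, sq, star_trivial]
    exact Matrix.dotProduct_mulVec_self_of_transpose_mul_eq_smul horth x.ofLp
  have exists_norm_le_inner (x : EuclideanSpace ℝ (Fin d)) : ∃ c ∈ CRM, ‖x‖ ≤ ⟪x, c⟫ := by
    have : Nonempty (Fin d) := ⟨⟨0, hd⟩⟩
    obtain ⟨i, hi⟩ := exists_le_abs_of_card_mul_sq_le_sum_sq (a := fun i => ⟪x, row i⟫)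
      (norm_nonneg x) (by simp [hsum x])
    rcases le_abs'.mp hi with h | h
    · exact ⟨-row i, ⟨i, .inr rfl⟩, by rw [inner_neg_right]; linarith⟩
    · exact ⟨row i, ⟨i, .inl rfl⟩, h⟩
  have hfin : CRM.Finite := ((Set.finite_range row).union (Set.finite_range (-row))).subset
    (by rintro c ⟨i, rfl | rfl⟩ <;> simp)
  have hnorm : ∀ c ∈ CRM, ‖c‖ = √d := by
    rintro c ⟨i, rfl | rfl⟩ <;>
      simpa [row] using EuclideanSpace.norm_eq_sqrt_card_of_forall_abs_eq_one
        (v := row i) fun j => by rcases hent i j with h | h <;> simp [row, h]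
  exact ⟨fun x hx => hx ▸ exists_norm_le_inner x,
    closedBall_subset_convexHull_of_norm_le_inner hfin exists_norm_le_inner,
    convexHull_min (fun c hc => by simp [hnorm c hc]) (convex_closedBall _ _)⟩
end

section
/- Any finite set C ⊂ ℝ^d satisfying B(0,1) ⊆ conv(C) ⊆ B(0,R) with R ≥ 1 must have |C| ≥ (1/2)·exp(α·d/R²) for some absolute constant α > 0 (e.g., α = 1/32). -/
/-!
Let `γ` be the standard Gaussian measure on `E` and `d = dim E`. Since the unit ball lies in
`conv C`, every `x` has some `c ∈ C` with `‖x‖ ≤ ⟪c, x⟫`, so the cones `{x | ‖x‖ ≤ ⟪c, x⟫}`,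
`c ∈ C`, cover `E` and `1 ≤ ∑ c ∈ C, γ {x | ‖x‖ ≤ ⟪c, x⟫}`. A point of such a cone either has
`⟪c, x⟫ ≥ √d / 2`, which has mass at most `exp (-d / (8 R²))` because `⟪c, ·⟫` is Gaussian of
variance `‖c‖² ≤ R²`, or has `‖x‖² ≤ d / 4`, which by a Chernoff bound with
`∫ exp (-‖x‖² / 2) dγ = 2 ^ (-d / 2)` has mass at most `exp (-d / 8)`. Hence
`#C ≥ exp (d / (8 R²)) / 2`. The Gaussian measure plays the role of the uniform measure on the
sphere in the spherical-cap argument.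
-/

open Real MeasureTheory ProbabilityTheory Module
open scoped RealInnerProductSpace NNReal

lemma ProbabilityTheory.HasSubgaussianMGF.mono {Ω : Type*} {mΩ : MeasurableSpace Ω}
    {μ : Measure Ω} {X : Ω → ℝ} {c c' : ℝ≥0} (h : HasSubgaussianMGF X c μ) (hc : c ≤ c') :
    HasSubgaussianMGF X c' μ where
  integrable_exp_mul := h.integrable_exp_mul
  mgf_le t := (h.mgf_le t).trans <| exp_le_exp.2 <| by gcongr

lemma hasSubgaussianMGF_id_gaussianReal (v : ℝ≥0) :
    HasSubgaussianMGF id v (gaussianReal 0 v) where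
  integrable_exp_mul := integrable_exp_mul_gaussianReal
  mgf_le t := by simp [mgf_id_gaussianReal]

lemma integral_exp_neg_half_sq_gaussianReal :
    ∫ x, exp (-x ^ 2 / 2) ∂gaussianReal 0 1 = (√2)⁻¹ := by
  rw [integral_gaussianReal_eq_integral_smul one_ne_zero]
  simp only [gaussianPDFReal_def, smul_eq_mul, sub_zero, NNReal.coe_one, mul_one]
  have hsq (x : ℝ) : (√(2 * π))⁻¹ * exp (-x ^ 2 / 2) * exp (-x ^ 2 / 2)
      = (√(2 * π))⁻¹ * exp (-1 * x ^ 2) := by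
    rw [mul_assoc, ← exp_add]
    ring_nf
  simp_rw [hsq, integral_const_mul, integral_gaussian, div_one, sqrt_mul zero_le_two]
  field_simp

lemma exp_div_eight_mul_inv_sqrt_two_pow_le (n : ℕ) :
    exp (n / 8) * (√2)⁻¹ ^ n ≤ exp (-n / 8) := by
  have hsqrt : exp (1 / 4) ≤ √2 := by
    rw [le_sqrt (exp_pos _).le zero_le_two, ← exp_nat_mul, ← le_log_iff_exp_le two_pos]
    linarith [log_two_gt_d9]
  calc exp (n / 8) * (√2)⁻¹ ^ n ≤ exp (n / 8) * (exp (1 / 4))⁻¹ ^ n := by gcongr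
    _ = exp (-n / 8) := by
      rw [← exp_neg, ← exp_nat_mul, ← exp_add]
      ring_nf

variable {E : Type*} [NormedAddCommGroup E] [InnerProductSpace ℝ E]

lemma exists_norm_le_inner_of_closedBall_subset_convexHull {s : Set E}
    (h : Metric.closedBall 0 1 ⊆ convexHull ℝ s) (x : E) : ∃ c ∈ s, ‖x‖ ≤ ⟪c, x⟫ := by
  by_contra! hlt
  have hy : ‖x‖⁻¹ • x ∈ convexHull ℝ s := h <| by
    rw [mem_closedBall_zero_iff, norm_smul, norm_inv, norm_norm]
    exact inv_mul_le_one_of_le₀ le_rfl (norm_nonneg x)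
  have hyx : ⟪‖x‖⁻¹ • x, x⟫ = ‖x‖ := by
    rw [real_inner_smul_left, real_inner_self_eq_norm_sq]
    rcases eq_or_ne ‖x‖ 0 with h0 | h0 <;> field_simp [h0]
  have hhalf : convexHull ℝ s ⊆ {y | ⟪y, x⟫ < ‖x‖} :=
    convexHull_min hlt <| (convex_Iio ‖x‖).linear_preimage ((innerₛₗ ℝ).flip x)
  exact (hhalf hy).ne hyx

variable [FiniteDimensional ℝ E]

section stdGaussian

variable [MeasurableSpace E] [BorelSpace E]

lemma hasSubgaussianMGF_inner_stdGaussian (c : E) :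
    HasSubgaussianMGF (fun x => ⟪c, x⟫) (‖c‖₊ ^ 2) (stdGaussian E) := by
  have hmap : (stdGaussian E).map (innerSL ℝ c) = gaussianReal 0 (‖c‖₊ ^ 2) := by
    rw [IsGaussian.map_eq_gaussianReal, integral_strongDual_stdGaussian,
      variance_dual_stdGaussian, innerSL_apply_norm]
    congr
    ext
    simp
  rw [← HasSubgaussianMGF.id_map_iff (by fun_prop)]
  exact hmap ▸ hasSubgaussianMGF_id_gaussianReal (‖c‖₊ ^ 2)

lemma integral_exp_neg_half_norm_sq_stdGaussian :
    ∫ x, exp (-‖x‖ ^ 2 / 2) ∂stdGaussian E = (√2)⁻¹ ^ finrank ℝ E := by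
  set b := stdOrthonormalBasis ℝ E
  have hnorm (x : Fin (finrank ℝ E) → ℝ) :
      exp (-‖∑ i, x i • b i‖ ^ 2 / 2) = ∏ i, exp (-x i ^ 2 / 2) := by
    rw [← exp_sum, b.sum_repr_symm (WithLp.toLp 2 x), b.repr.symm.norm_map,
      EuclideanSpace.real_norm_sq_eq]
    simp [Finset.sum_div, neg_div]
  rw [stdGaussian_eq_map_pi_orthonormalBasis b,
    integral_map (Continuous.aemeasurable (by fun_prop)) (by fun_prop)]
  simp_rw [hnorm]
  rw [integral_fintype_prod_eq_pow (fun x => exp (-x ^ 2 / 2)),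
    integral_exp_neg_half_sq_gaussianReal, Fintype.card_fin]

lemma stdGaussian_real_norm_sq_le_le (r : ℝ) :
    (stdGaussian E).real {x | ‖x‖ ^ 2 ≤ r} ≤ exp (r / 2) * (√2)⁻¹ ^ finrank ℝ E := by
  have hint : Integrable (fun x => exp (-(1 / 2) * ‖x‖ ^ 2)) (stdGaussian E) :=
    .of_bound (by fun_prop) 1 <| .of_forall fun x => by
      rw [norm_of_nonneg (exp_pos _).le, exp_le_one_iff]
      nlinarith [sq_nonneg ‖x‖]
  convert measure_le_le_exp_mul_mgf (X := fun x => ‖x‖ ^ 2) r (by norm_num) hint using 2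
  · ring_nf
  · rw [mgf, ← integral_exp_neg_half_norm_sq_stdGaussian]
    ring_nf

lemma stdGaussian_real_norm_le_inner_le {c : E} {R : ℝ} (hR : 1 ≤ R) (hc : ‖c‖ ≤ R) :
    (stdGaussian E).real {x | ‖x‖ ≤ ⟪c, x⟫} ≤ 2 * exp (-finrank ℝ E / (8 * R ^ 2)) := by
  set d : ℝ := (finrank ℝ E : ℝ)
  have hR0 : 0 < R := zero_lt_one.trans_le hR
  have hsplit : {x : E | ‖x‖ ≤ ⟪c, x⟫} ⊆ {x | √d / 2 ≤ ⟪c, x⟫} ∪ {x | ‖x‖ ^ 2 ≤ d / 4} := by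
    intro x hx
    by_cases hsmall : ‖x‖ ^ 2 ≤ d / 4
    · exact Or.inr hsmall
    · refine Or.inl (show √d / 2 ≤ ⟪c, x⟫ from le_trans ?_ hx)
      rw [div_le_iff₀ two_pos, sqrt_le_left (by positivity)]
      nlinarith
  have htail : (stdGaussian E).real {x | √d / 2 ≤ ⟪c, x⟫} ≤ exp (-d / (8 * R ^ 2)) := by
    have hcR : ‖c‖₊ ^ 2 ≤ R.toNNReal ^ 2 := by
      gcongr
      exact (Real.le_toNNReal_iff_coe_le hR0.le).2 hc
    refine (((hasSubgaussianMGF_inner_stdGaussian c).mono hcR).measure_ge_le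
      (by positivity)).trans_eq ?_
    rw [NNReal.coe_pow, Real.coe_toNNReal _ hR0.le, div_pow, sq_sqrt (Nat.cast_nonneg _)]
    simp only [d]
    ring_nf
  have hball : (stdGaussian E).real {x | ‖x‖ ^ 2 ≤ d / 4} ≤ exp (-d / (8 * R ^ 2)) :=
    calc _ ≤ exp (d / 4 / 2) * (√2)⁻¹ ^ finrank ℝ E := stdGaussian_real_norm_sq_le_le _
      _ = exp (d / 8) * (√2)⁻¹ ^ finrank ℝ E := by ring_nf
      _ ≤ exp (-d / 8) := exp_div_eight_mul_inv_sqrt_two_pow_le _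
      _ ≤ exp (-d / (8 * R ^ 2)) := by
        rw [exp_le_exp, neg_div, neg_div, neg_le_neg_iff]
        exact div_le_div_of_nonneg_left (by positivity) (by norm_num) (by nlinarith)
  calc (stdGaussian E).real {x | ‖x‖ ≤ ⟪c, x⟫}
      ≤ (stdGaussian E).real ({x | √d / 2 ≤ ⟪c, x⟫} ∪ {x | ‖x‖ ^ 2 ≤ d / 4}) :=
        measureReal_mono hsplit
    _ ≤ _ := (measureReal_union_le _ _).trans (by linarith)

end stdGaussian

theorem exp_div_le_card_of_closedBall_subset_convexHull {C : Finset E} {R : ℝ} (hR : 1 ≤ R)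
    (hball : Metric.closedBall 0 1 ⊆ convexHull ℝ (C : Set E)) (hC : ∀ c ∈ C, ‖c‖ ≤ R) :
    exp (finrank ℝ E / (8 * R ^ 2)) / 2 ≤ C.card := by
  borelize E
  have hcover : Set.univ ⊆ ⋃ c ∈ C, {x : E | ‖x‖ ≤ ⟪c, x⟫} := fun x _ => by
    obtain ⟨c, hc, hx⟩ := exists_norm_le_inner_of_closedBall_subset_convexHull hball x
    exact Set.mem_biUnion hc hx
  have hone : 1 ≤ C.card * (2 * exp (-finrank ℝ E / (8 * R ^ 2))) :=
    calc (1 : ℝ) = (stdGaussian E).real Set.univ := by simp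
      _ ≤ ∑ c ∈ C, (stdGaussian E).real {x | ‖x‖ ≤ ⟪c, x⟫} :=
        (measureReal_mono hcover (measure_ne_top _ _)).trans (measureReal_biUnion_finset_le _ _)
      _ ≤ ∑ c ∈ C, 2 * exp (-finrank ℝ E / (8 * R ^ 2)) :=
        Finset.sum_le_sum fun c hc => stdGaussian_real_norm_le_inner_le hR (hC c hc)
      _ = _ := by rw [Finset.sum_const, nsmul_eq_mul]
  rw [neg_div, exp_neg] at hone
  rw [div_le_iff₀ two_pos]
  field_simp at hone
  linarith

theorem stmt_10 :
    ∃ α : ℝ, 0 < α ∧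
      ∀ (d : ℕ) (R : ℝ), 1 ≤ R →
        ∀ C : Finset (EuclideanSpace ℝ (Fin d)),
          Metric.closedBall (0 : EuclideanSpace ℝ (Fin d)) 1 ⊆
              convexHull ℝ (C : Set (EuclideanSpace ℝ (Fin d))) →
          convexHull ℝ (C : Set (EuclideanSpace ℝ (Fin d))) ⊆
              Metric.closedBall (0 : EuclideanSpace ℝ (Fin d)) R →
          (1 / 2) * Real.exp (α * d / R ^ 2) ≤ (C.card : ℝ) := by
  refine ⟨1 / 8, by norm_num, fun d R hR C hball hhull => ?_⟩
  have hC : ∀ c ∈ C, ‖c‖ ≤ R := fun c hc =>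
    mem_closedBall_zero_iff.1 (hhull (subset_convexHull ℝ _ hc))
  have hcard := exp_div_le_card_of_closedBall_subset_convexHull hR hball hC
  rw [finrank_euclideanSpace_fin] at hcard
  convert hcard using 1
  ring_nf
end

section
/- Let d+1 = 2^p and let H be the (d+1)×(d+1) Sylvester Hadamard matrix. For i ∈ [d+1] let h_i ∈ ℝ^d be the i-th column of H with first coordinate removed, and set C_H = {2√d·h_i : i ∈ [d+1]}. Then every v ∈ B(0,1) equals Σ_i a_i·(2√d·h_i) with a_i = (1/(d+1))·(1 + ⟨h_i, v⟩/(2√d)), and these a_i are nonnegative and sum to 1. -/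
/-!
Deleting the first coordinate of the columns of `H` leaves vectors `h i` that sum to zero (the
other rows of `H` are orthogonal to the all-ones first row) and form a tight frame,
`∑ i, ⟪h i, v⟫ • h i = (d + 1) • v` (the remaining rows are pairwise orthogonal of squared norm
`d + 1`). These two identities give `∑ a i = 1` and `∑ a i • (2√d • h i) = v`. Since the entries
are `±1`, `‖h i‖ = √d`, so Cauchy–Schwarz gives `⟪h i, v⟫ / (2√d) ≥ -1/2` and hence `a i ≥ 0`.
-/

open scoped RealInnerProductSpace
open Finset Matrix

section TightFrame

variable {E : Type*} [NormedAddCommGroup E] [InnerProductSpace ℝ E] {ι : Type*} [Fintype ι]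

theorem sum_barycentric_weights_eq {h : ι → E} (hsum : ∑ i, h i = 0) (c r : ℝ) (v : E) :
    ∑ i, (1 / c) * (1 + ⟪h i, v⟫ / r) = Fintype.card ι / c := by
  have hinner : ∑ i, ⟪h i, v⟫ = 0 := by rw [← sum_inner, hsum, inner_zero_left]
  rw [← mul_sum, sum_add_distrib, ← sum_div, hinner]
  simp [div_eq_inv_mul]

theorem sum_barycentric_weights_smul_eq {h : ι → E} {c r : ℝ} (hc : c ≠ 0) (hr : r ≠ 0)
    (hsum : ∑ i, h i = 0) {v : E} (hframe : ∑ i, ⟪h i, v⟫ • h i = c • v) :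
    ∑ i, ((1 / c) * (1 + ⟪h i, v⟫ / r)) • (r • h i) = v := by
  have hterm : ∀ i, ((1 / c) * (1 + ⟪h i, v⟫ / r)) • (r • h i)
      = (1 / c) • (r • h i + ⟪h i, v⟫ • h i) := by
    intro i
    rw [smul_smul, smul_add, smul_smul, smul_smul, ← add_smul]
    congr 1
    field_simp
  simp only [hterm, ← smul_sum, sum_add_distrib, hsum, smul_zero, zero_add, hframe, smul_smul]
  rw [one_div_mul_cancel hc, one_smul]

theorem one_add_inner_div_two_mul_norm_nonneg (x : E) {v : E} (hv : ‖v‖ ≤ 1) :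
    0 ≤ 1 + ⟪x, v⟫ / (2 * ‖x‖) := by
  rcases (norm_nonneg x).eq_or_lt with hx | hx
  · simp [← hx]
  · have hlow : -‖x‖ ≤ ⟪x, v⟫ :=
      neg_le_of_abs_le ((abs_real_inner_le_norm x v).trans (mul_le_of_le_one_right hx.le hv))
    have hhalf : -(1 / 2 : ℝ) ≤ ⟪x, v⟫ / (2 * ‖x‖) := by
      rw [le_div_iff₀ (by positivity)]
      linarith
    linarith

end TightFrame

section EuclideanColumns

variable {m ι : Type*} [Fintype m] [Fintype ι]

theorem sum_inner_smul_eq_of_mul_transpose [DecidableEq m] (G : Matrix m ι ℝ) {c : ℝ}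
    (hG : G * Gᵀ = c • 1) (v : EuclideanSpace ℝ m) :
    ∑ i, ⟪WithLp.toLp 2 (Gᵀ i), v⟫ • WithLp.toLp 2 (Gᵀ i) = c • v := by
  have hGGt : G *ᵥ (Gᵀ *ᵥ v.ofLp) = c • v.ofLp := by
    rw [mulVec_mulVec, hG, smul_mulVec, one_mulVec]
  ext k
  simpa [WithLp.ofLp_sum, PiLp.inner_apply, mulVec, dotProduct, mul_comm] using congr_fun hGGt k

theorem EuclideanSpace.norm_eq_sqrt_card_of_sign {x : EuclideanSpace ℝ m}
    (hx : ∀ k, x k = 1 ∨ x k = -1) : ‖x‖ = √(Fintype.card m) := by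
  rw [EuclideanSpace.norm_eq]
  congr 1
  have hsq : ∀ k, ‖x k‖ ^ 2 = 1 := fun k => by rcases hx k with h | h <;> simp [h]
  simp only [hsq, sum_const, card_univ, nsmul_eq_mul, mul_one]

theorem sum_row_eq_zero_of_mul_transpose {n : Type*} [DecidableEq n] (H : Matrix n ι ℝ) {c : ℝ}
    (hH : H * Hᵀ = c • 1) {r₀ r : n} (hr₀ : ∀ j, H r₀ j = 1) (hr : r ≠ r₀) :
    ∑ j, H r j = 0 := by
  simpa [mul_apply, hr₀, hr] using congr_fun₂ hH r r₀

end EuclideanColumns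

theorem stmt_14_general (d : ℕ)
    (H : Matrix (Fin (d + 1)) (Fin (d + 1)) ℝ)
    (hent : ∀ i j, H i j = 1 ∨ H i j = -1)
    (horth₂ : H * H.transpose = ((d : ℝ) + 1) • 1)
    (hfirst : ∀ j, H 0 j = 1)
    (v : EuclideanSpace ℝ (Fin d)) (hv : ‖v‖ ≤ 1) :
    let h : Fin (d + 1) → EuclideanSpace ℝ (Fin d) := fun i => WithLp.toLp 2 (fun k : Fin d => H k.succ i)
    let a : Fin (d + 1) → ℝ := fun i =>
      (1 / ((d : ℝ) + 1)) * (1 + ⟪h i, v⟫ / (2 * Real.sqrt d))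
    (∀ i, 0 ≤ a i) ∧ (∑ i, a i = 1) ∧
      (∑ i, a i • ((2 * Real.sqrt d) • h i) = v) := by
  intro h a
  have hsum : ∑ i, h i = 0 := by
    ext k
    simp [h, WithLp.ofLp_sum, sum_row_eq_zero_of_mul_transpose H horth₂ hfirst k.succ_ne_zero]
  have hframe : ∑ i, ⟪h i, v⟫ • h i = ((d : ℝ) + 1) • v := by
    let G : Matrix (Fin d) (Fin (d + 1)) ℝ := H.submatrix Fin.succ id
    have hG : G * Gᵀ = ((d : ℝ) + 1) • 1 := by
      rw [transpose_submatrix, ← submatrix_mul _ _ _ _ _ Function.bijective_id, horth₂]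
      exact congrArg (((d : ℝ) + 1) • · : Matrix (Fin d) (Fin d) ℝ → _)
        (submatrix_one _ (Fin.succ_injective _))
    exact sum_inner_smul_eq_of_mul_transpose G hG v
  have hnorm : ∀ i, ‖h i‖ = √d := fun i => by
    simpa using EuclideanSpace.norm_eq_sqrt_card_of_sign (x := h i) (fun k => hent k.succ i)
  refine ⟨fun i => ?_, ?_, ?_⟩
  · have hcoef := one_add_inner_div_two_mul_norm_nonneg (h i) hv
    rw [hnorm] at hcoef
    exact mul_nonneg (by positivity) hcoef
  · rw [sum_barycentric_weights_eq hsum]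
    simp [Nat.cast_add_one_ne_zero]
  · rcases d.eq_zero_or_pos with rfl | hd
    · exact Subsingleton.elim _ _
    · exact sum_barycentric_weights_smul_eq (by positivity) (by positivity) hsum hframe

theorem stmt_14 (d p : ℕ) (hp : d + 1 = 2 ^ p)
    (H : Matrix (Fin (d + 1)) (Fin (d + 1)) ℝ)
    (hent : ∀ i j, H i j = 1 ∨ H i j = -1)
    (horth₁ : H.transpose * H = ((d : ℝ) + 1) • 1)
    (horth₂ : H * H.transpose = ((d : ℝ) + 1) • 1)
    (hfirst : ∀ j, H 0 j = 1)
    (v : EuclideanSpace ℝ (Fin d)) (hv : ‖v‖ ≤ 1) :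
    let h : Fin (d + 1) → EuclideanSpace ℝ (Fin d) := fun i => WithLp.toLp 2 (fun k : Fin d => H k.succ i)
    let a : Fin (d + 1) → ℝ := fun i =>
      (1 / ((d : ℝ) + 1)) * (1 + ⟪h i, v⟫ / (2 * Real.sqrt d))
    (∀ i, 0 ≤ a i) ∧ (∑ i, a i = 1) ∧
      (∑ i, a i • ((2 * Real.sqrt d) • h i) = v) :=
  stmt_14_general d H hent horth₂ hfirst v hv
end
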